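/- arXiv:2007.00735 — 4 statements merged into one kernel-verified Lean document; each statement's English description precedes it below -/
import Mathlib

section
/- Fix L, N ∈ ℕ with N < L. For any two N-element subsets x, y of ℤ/Lℤ, the graph distance in the hard-core configuration graph satisfies d_L^N(x,y) = min over cyclic permutations σ of {1,...,N} of Σ_{j=1}^N d_L(x_j, y_{σ(j)}), where x_1 < ... < x_N and y_1 < ... < y_N are the elements of x and y listed in increasing order (as representatives in {0,...,L-1}), and moreover this minimum over cyclic permutations equals the minimum over all permutations of {1,...,N}. -/
open Finset
open scoped Classical
open Fin.NatCast

noncomputable section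

/-- Distance on the cycle `ℤ/L`. -/
def cycDist {L : ℕ} (a b : Fin L) : ℕ := min (a - b).val (b - a).val

/-- Hard-core configuration graph: an edge moves one particle to a free neighbouring site. -/
def hcGraph (L : ℕ) [NeZero L] : SimpleGraph (Finset (Fin L)) where
  Adj x y := x.card = y.card ∧ ∃ j : Fin L, symmDiff x y = {j, j + ((1 : ℕ) : Fin L)}
  symm := by
    constructor
    rintro x y ⟨h1, j, h2⟩
    refine ⟨h1.symm, j, ?_⟩
    rw [symmDiff_comm]
    exact h2
  loopless := by
    constructor
    rintro x ⟨-, j, h2⟩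
    have hj : j ∈ symmDiff x x := by rw [h2]; simp
    rw [symmDiff_self] at hj
    simp at hj

/-- Graph distance `d_L^N` on the hard-core configuration graph. -/
def dN (L : ℕ) [NeZero L] (x y : Finset (Fin L)) : ℕ := (hcGraph L).dist x y

/-- The droplet (cluster of `N` consecutive sites) centred at `m`. -/
def droplet (L N : ℕ) [NeZero L] (m : Fin L) : Finset (Fin L) :=
  (Finset.range N).image fun i => m - (((N - 1) / 2 : ℕ) : Fin L) + (i : Fin L)

def isDroplet (L N : ℕ) [NeZero L] (c : Finset (Fin L)) : Prop := ∃ m : Fin L, c = droplet L N m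

/-- Distance to the set of droplet configurations. -/
def distDrop (L N : ℕ) [NeZero L] (x : Finset (Fin L)) : ℕ :=
  sInf (Set.range fun m : Fin L => dN L x (droplet L N m))

/-- Centres of droplets closest to `x`. -/
def WL (L N : ℕ) [NeZero L] (x : Finset (Fin L)) : Set (Fin L) :=
  {m : Fin L | dN L x (droplet L N m) = distDrop L N x}

/-- A path of length `k` from `x` to `y` in the configuration graph. -/
def IsPathN (L : ℕ) [NeZero L] (u : ℕ → Finset (Fin L)) (k : ℕ) (x y : Finset (Fin L)) : Prop :=
  u 0 = x ∧ u k = y ∧ ∀ l < k, (hcGraph L).Adj (u l) (u (l + 1))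

/-- The particle-tracking of a path: the labelled positions `ũ`. -/
def IsTracking (L N : ℕ) [NeZero L] (u : ℕ → Finset (Fin L)) (k : ℕ) (ut : ℕ → Fin N → Fin L) : Prop :=
  StrictMono (ut 0) ∧
  (∀ l ≤ k, u l = Finset.image (ut l) Finset.univ) ∧
  ∀ l < k, ∀ j : Fin N, (ut l j ∈ u (l + 1) → ut (l + 1) j = ut l j) ∧
    (ut l j ∉ u (l + 1) → ut (l + 1) j ∈ u (l + 1) \ u l)

/-- `L_j^u` : distance travelled by particle `j` along the tracked path. -/
def travel {L N : ℕ} (ut : ℕ → Fin N → Fin L) (k : ℕ) (j : Fin N) : ℕ :=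
  ∑ l ∈ Finset.range k, cycDist (ut l j) (ut (l + 1) j)

/-- `I_-^u` : particles moving counter-clockwise. -/
def Iminus {L N : ℕ} [NeZero L] (ut : ℕ → Fin N → Fin L) (k : ℕ) (j : Fin N) : Prop :=
  travel ut k j ≠ 0 ∧ ∃ l ≤ k, ut l j = ut 0 j - ((1 : ℕ) : Fin L)

/-- `I_+^u` : particles moving clockwise. -/
def Iplus {L N : ℕ} [NeZero L] (ut : ℕ → Fin N → Fin L) (k : ℕ) (j : Fin N) : Prop :=
  travel ut k j ≠ 0 ∧ ∃ l ≤ k, ut l j = ut 0 j + ((1 : ℕ) : Fin L)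

/-- `I_0^u` : particles that do not move. -/
def I0 {L N : ℕ} (ut : ℕ → Fin N → Fin L) (k : ℕ) (j : Fin N) : Prop := travel ut k j = 0

/-- The midpoint `M = ⌊(L-1)/2⌋` of the cycle. -/
def midL (L : ℕ) [NeZero L] : Fin L := (((L - 1) / 2 : ℕ) : Fin L)

/-- The sector of size `θ` around `m`, as a set. -/
def sector (L : ℕ) [NeZero L] (m : Fin L) (θ : ℝ) : Set (Fin L) :=
  {k : Fin L | (cycDist k m : ℝ) < θ * L}

/-- The sector of size `θ` around `m`, as a finset. -/
def secF (L : ℕ) [NeZero L] (m : Fin L) (θ : ℝ) : Finset (Fin L) :=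
  Finset.univ.filter fun k => (cycDist k m : ℝ) < θ * L


/-!
Compare `x` with `y` through integer flows on the edges of the cycle whose divergence is
`𝟙 x - 𝟙 y`, the cost of a flow being its total absolute value. Routing each particle along
the shorter arc to its partner turns any matching `σ` into a flow of cost at most
`∑ j, d_L(x_j, y_{σ j})`. Conversely, unless the flow has constant sign (and a constant shift
makes it cheaper), some particle sits at the tail of an edge carrying flow in its direction with
the head free; moving it across lowers the cost by one. So `d_L^N(x, y)` is at most every
matching cost.

A single move changes the increasing enumeration of a configuration only at the moved particle,
up to a rotation of the labels by one when it crosses between `L - 1` and `0`. Following a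
geodesic from `x` to `y` therefore tracks the particles by a cyclic permutation of total
displacement at most `d_L^N(x, y)`, which squeezes both minima onto the distance.
-/

variable {L : ℕ}

lemma Finset.sum_orderEmbOfFin {α M : Type*} [LinearOrder α] [AddCommMonoid M] (s : Finset α)
    {N : ℕ} (h : s.card = N) (f : α → M) :
    ∑ j, f (s.orderEmbOfFin h j) = ∑ z ∈ s, f z := by
  conv_rhs => rw [← s.map_orderEmbOfFin_univ h, Finset.sum_map]
  rfl

lemma Finset.card_symmDiff_add_two_mul_card_inter {α : Type*} [DecidableEq α] (s t : Finset α) :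
    (symmDiff s t).card + 2 * (s ∩ t).card = s.card + t.card := by
  rw [Finset.symmDiff_def, card_union_of_disjoint disjoint_sdiff_sdiff, card_sdiff, card_sdiff,
    inter_comm t s]
  have := card_le_card (inter_subset_left : s ∩ t ⊆ s)
  have := card_le_card (inter_subset_right : s ∩ t ⊆ t)
  omega

lemma Finset.card_symmDiff_pair_eq_iff {α : Type*} [DecidableEq α] (s : Finset α) (a b : α) :
    (symmDiff s {a, b}).card = s.card ↔ (a ∈ s ↔ b ∉ s) := by
  have key := s.card_symmDiff_add_two_mul_card_inter {a, b}
  by_cases hab : a = b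
  · subst hab
    by_cases ha : a ∈ s <;> simp_all [inter_singleton_of_mem]
    omega
  · rw [card_pair hab] at key
    by_cases ha : a ∈ s <;> by_cases hb : b ∈ s <;>
      simp_all [inter_insert_of_mem, inter_insert_of_notMem, inter_singleton_of_mem,
        inter_singleton_of_notMem]
    omega

lemma Finset.swap_mem_symmDiff_pair {α : Type*} [DecidableEq α] {s : Finset α} {a b z : α}
    (ha : a ∈ s) (hb : b ∉ s) (hz : z ∈ s) : Equiv.swap a b z ∈ symmDiff s {a, b} := by
  by_cases hza : z = a
  · subst hza
    simp [mem_symmDiff, hb]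
  · have hzb : z ≠ b := ne_of_mem_of_not_mem hz hb
    rw [Equiv.swap_apply_of_ne_of_ne hza hzb]
    simp [mem_symmDiff, hz, hza, hzb]

lemma sum_natAbs_add_single_lt {ι : Type*} [Fintype ι] [DecidableEq ι] {J : ι → ℤ} {a : ι}
    {ε : ℤ} (h : (J a + ε).natAbs < (J a).natAbs) :
    ∑ i, (J i + (Pi.single a ε : ι → ℤ) i).natAbs < ∑ i, (J i).natAbs := by
  refine sum_lt_sum (fun i _ => ?_) ⟨a, mem_univ a, by simpa using h⟩
  rcases eq_or_ne i a with rfl | hi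
  · simpa using h.le
  · simp [hi]

lemma Fin.val_add_le (u v : Fin L) : (u + v).val ≤ u.val + v.val := by
  rw [Fin.val_add]; exact Nat.mod_le _ _

lemma Fin.cyclic_induction [NeZero L] {p : Fin L → Prop} (h : ∀ i, p i → p (i + 1))
    {a : Fin L} (ha : p a) (b : Fin L) : p b := by
  have key : ∀ k : ℕ, p (a + k) := fun k => by
    induction k with
    | zero => simpa using ha
    | succ k ih => simpa [add_assoc] using h _ ih
  simpa using key (b - a).val

lemma cycDist_comm (a b : Fin L) : cycDist a b = cycDist b a := min_comm _ _

section CycDist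

variable [NeZero L]

lemma cycDist_self (a : Fin L) : cycDist a a = 0 := by simp [cycDist]

lemma cycDist_add_one_le (a : Fin L) : cycDist a (a + 1) ≤ 1 := by
  refine (min_le_right _ _).trans ?_
  rw [add_sub_cancel_left, Fin.val_one']
  exact Nat.mod_le 1 L

lemma cycDist_le_of_sub_eq {a c p q : Fin L} (h : a - c = p - q) :
    cycDist a c ≤ p.val + q.val := by
  rcases le_total q p with hqp | hpq
  · have := Fin.coe_sub_iff_le.mpr hqp
    exact (min_le_left _ _).trans (by rw [h]; omega)
  · have hca : c - a = q - p := by rw [← neg_sub, h, neg_sub]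
    have := Fin.coe_sub_iff_le.mpr hpq
    exact (min_le_right _ _).trans (by rw [hca]; omega)

lemma cycDist_triangle (a b c : Fin L) : cycDist a c ≤ cycDist a b + cycDist b c := by
  have h₁ : cycDist a c ≤ (a - b).val + (b - c).val :=
    (min_le_left _ _).trans ((sub_add_sub_cancel a b c).symm ▸ Fin.val_add_le _ _)
  have h₂ : cycDist a c ≤ (c - b).val + (b - a).val :=
    (min_le_right _ _).trans ((sub_add_sub_cancel c b a).symm ▸ Fin.val_add_le _ _)
  have h₃ : cycDist a c ≤ (a - b).val + (c - b).val :=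
    cycDist_le_of_sub_eq (sub_sub_sub_cancel_right a c b).symm
  have h₄ : cycDist a c ≤ (b - c).val + (b - a).val :=
    cycDist_le_of_sub_eq (sub_sub_sub_cancel_left c a b).symm
  simp only [cycDist] at *
  omega

end CycDist

def charge (x : Finset (Fin L)) : Fin L → ℤ := fun i => if i ∈ x then 1 else 0

lemma charge_injective : Function.Injective (charge (L := L)) := fun x y h => by
  ext i
  have := congrFun h i
  simp only [charge] at this
  split_ifs at this <;> simp_all

lemma charge_compl (x : Finset (Fin L)) : charge xᶜ = 1 - charge x := by
  ext i
  by_cases hi : i ∈ x <;> simp [charge, hi]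

lemma charge_symmDiff_pair {x : Finset (Fin L)} {a b : Fin L} (ha : a ∈ x) (hb : b ∉ x) :
    charge (symmDiff x {a, b}) = charge x - Pi.single a 1 + Pi.single b 1 := by
  have hab : a ≠ b := ne_of_mem_of_not_mem ha hb
  ext i
  by_cases hia : i = a
  · subst hia; simp [charge, mem_symmDiff, ha, hab]
  by_cases hib : i = b
  · subst hib; simp [charge, mem_symmDiff, hb, hab.symm]
  · simp [charge, mem_symmDiff, hia, hib]

lemma charge_eq_sum_single {N : ℕ} (x : Finset (Fin L)) (hx : x.card = N) :
    charge x = ∑ j, Pi.single (x.orderEmbOfFin hx j) 1 := by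
  ext i
  rw [Finset.sum_apply, x.sum_orderEmbOfFin hx fun z => Pi.single z (1 : ℤ) i, sum_pi_single]
  rfl

def matchingCost {N : ℕ} (x y : Finset (Fin L)) (hx : x.card = N) (hy : y.card = N)
    (σ : Equiv.Perm (Fin N)) : ℕ :=
  ∑ j, cycDist (x.orderEmbOfFin hx j) (y.orderEmbOfFin hy (σ j))

section Flow

variable [NeZero L]

/-- `J i` is the net flow carried clockwise across the edge `{i, i + 1}`. -/
def IsFlow (μ J : Fin L → ℤ) : Prop := ∀ i, J i - J (i - 1) = μ i

namespace IsFlow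

variable {μ ν J K : Fin L → ℤ}

lemma add (h : IsFlow μ J) (h' : IsFlow ν K) : IsFlow (μ + ν) (J + K) := fun i => by
  simp only [Pi.add_apply, ← h i, ← h' i]; ring

lemma neg (h : IsFlow μ J) : IsFlow (-μ) (-J) := fun i => by
  simp only [Pi.neg_apply, ← h i]; ring

lemma sub (h : IsFlow μ J) (h' : IsFlow ν K) : IsFlow (μ - ν) (J - K) := by
  simpa only [sub_eq_add_neg] using h.add h'.neg

lemma add_const (h : IsFlow μ J) (c : ℤ) : IsFlow μ fun i => J i + c := fun i => by
  simp only [← h i]; ring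

lemma sum {ι : Type*} (s : Finset ι) {μ J : ι → Fin L → ℤ}
    (h : ∀ j ∈ s, IsFlow (μ j) (J j)) : IsFlow (∑ j ∈ s, μ j) (∑ j ∈ s, J j) := by
  intro i
  simp only [Finset.sum_apply, ← Finset.sum_sub_distrib]
  exact Finset.sum_congr rfl fun j hj => h j hj i

end IsFlow

lemma isFlow_single (a : Fin L) :
    IsFlow (Pi.single a 1 - Pi.single (a + 1) 1) (Pi.single a 1) :=
  fun i => by simp [Pi.single_apply, sub_eq_iff_eq_add]

def arcFlow (a b : Fin L) : Fin L → ℤ := fun i => if (i - a).val < (b - a).val then 1 else 0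

lemma isFlow_arcFlow (a b : Fin L) : IsFlow (Pi.single a 1 - Pi.single b 1) (arcFlow a b) := by
  obtain ⟨n, rfl⟩ := Nat.exists_eq_add_one_of_ne_zero (NeZero.ne L)
  intro i
  have hpred : (i - 1 - a).val = if i - a = 0 then n else (i - a).val - 1 := by
    rw [sub_right_comm, Fin.coe_sub_one]
  have hia : i = a ↔ (i - a).val = 0 := by rw [Fin.val_eq_zero_iff, sub_eq_zero]
  have hib : i = b ↔ (i - a).val = (b - a).val := by rw [Fin.val_inj, sub_left_inj]
  have := (i - a).isLt
  have := (b - a).isLt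
  simp only [arcFlow, Pi.sub_apply, Pi.single_apply, hpred, hia, hib, ← Fin.val_eq_zero_iff]
  split_ifs <;> omega

lemma sum_natAbs_arcFlow (a b : Fin L) : ∑ i, (arcFlow a b i).natAbs = (b - a).val := by
  calc ∑ i, (arcFlow a b i).natAbs
      = ∑ i : Fin L, if (i - a).val < (b - a).val then 1 else 0 := by
        simp only [arcFlow]; congr! 1; split_ifs <;> rfl
    _ = ∑ u : Fin L, if u.val < (b - a).val then 1 else 0 :=
        Fintype.sum_equiv (Equiv.subRight a) _ _ fun _ => rfl
    _ = (b - a).val := by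
        simp only [sum_boole, Nat.cast_id, ← Fin.lt_def]
        rw [filter_gt_eq_Iio, Fin.card_Iio]

lemma exists_isFlow_single_sub_single (a b : Fin L) :
    ∃ J, IsFlow (Pi.single a 1 - Pi.single b 1) J ∧ ∑ i, (J i).natAbs = cycDist a b := by
  rcases min_cases (a - b).val (b - a).val with ⟨h, -⟩ | ⟨h, -⟩
  · refine ⟨-arcFlow b a, by simpa using (isFlow_arcFlow b a).neg, ?_⟩
    simp only [Pi.neg_apply, Int.natAbs_neg, sum_natAbs_arcFlow, cycDist, h]
  · exact ⟨arcFlow a b, isFlow_arcFlow a b, by rw [sum_natAbs_arcFlow, cycDist, h]⟩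

lemma exists_isFlow_le_matchingCost {N : ℕ} {x y : Finset (Fin L)} (hx : x.card = N)
    (hy : y.card = N) (σ : Equiv.Perm (Fin N)) :
    ∃ J, IsFlow (charge x - charge y) J ∧
      ∑ i, (J i).natAbs ≤ matchingCost x y hx hy σ := by
  choose J hJ hcost using fun j =>
    exists_isFlow_single_sub_single (x.orderEmbOfFin hx j) (y.orderEmbOfFin hy (σ j))
  refine ⟨∑ j, J j, ?_, ?_⟩
  · have := IsFlow.sum univ fun j _ => hJ j
    rwa [sum_sub_distrib, ← charge_eq_sum_single,
      Equiv.sum_comp σ fun j => (Pi.single (y.orderEmbOfFin hy j) 1 : Fin L → ℤ),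
      ← charge_eq_sum_single] at this
  · calc ∑ i, ((∑ j, J j) i).natAbs ≤ ∑ i, ∑ j, (J j i).natAbs :=
          sum_le_sum fun i _ => by rw [Finset.sum_apply]; exact Int.natAbs_sum_le _ _
      _ = ∑ j, ∑ i, (J j i).natAbs := sum_comm
      _ = matchingCost x y hx hy σ := sum_congr rfl fun j _ => hcost j

lemma exists_mem_add_one_notMem_of_isFlow {x y : Finset (Fin L)} {J : Fin L → ℤ}
    (hJ : IsFlow (charge x - charge y) J) {i₀ i₁ : Fin L} (h₀ : 1 ≤ J i₀)
    (h₁ : J i₁ ≤ 0) :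
    ∃ a ∈ x, a + 1 ∉ x ∧ 1 ≤ J a := by
  have step : ∀ i, J (i + 1) = J i + charge x (i + 1) - charge y (i + 1) := fun i => by
    have := hJ (i + 1)
    rw [add_sub_cancel_right, Pi.sub_apply] at this
    omega
  have hy : ∀ i, 0 ≤ charge y i ∧ charge y i ≤ 1 := fun i => by
    unfold charge; split_ifs <;> omega
  obtain ⟨e, hex, hJe⟩ : ∃ e ∈ x, 1 ≤ J e := by
    by_contra! hno
    -- with no particle where `J` is positive, `J ≤ 0` would propagate clockwise
    have := Fin.cyclic_induction (p := fun i => J i ≤ 0) (fun i hi => ?_) h₁ i₀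
    · omega
    · by_contra! hpos
      have hcx : charge x (i + 1) = 0 := if_neg fun hm => by have := hno _ hm; omega
      have := step i
      have := hy (i + 1)
      omega
  by_contra! hno
  have :=
    Fin.cyclic_induction (p := fun i => i ∈ x ∧ 1 ≤ J i) (fun i hi => ?_) ⟨hex, hJe⟩ i₁
  · omega
  · have hi1 : i + 1 ∈ x := by by_contra hm; have := hno i hi.1 hm; omega
    have hcx : charge x (i + 1) = 1 := if_pos hi1
    have := step i
    have := hy (i + 1)
    exact ⟨hi1, by omega⟩

lemma exists_notMem_add_one_mem_of_isFlow {x y : Finset (Fin L)} {J : Fin L → ℤ}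
    (hJ : IsFlow (charge x - charge y) J) {i₀ i₁ : Fin L} (h₀ : J i₀ ≤ -1)
    (h₁ : 0 ≤ J i₁) :
    ∃ a ∉ x, a + 1 ∈ x ∧ J a ≤ -1 := by
  have hJc : IsFlow (charge xᶜ - charge yᶜ) (-J) := by
    rw [charge_compl, charge_compl, sub_sub_sub_cancel_left, ← neg_sub]
    exact hJ.neg
  obtain ⟨a, ha, ha', hJa⟩ :=
    exists_mem_add_one_notMem_of_isFlow hJc (i₀ := i₀) (i₁ := i₁) (by simp; omega)
      (by simp; omega)
  exact ⟨a, mem_compl.1 ha, by simpa using ha', by simp at hJa; omega⟩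

end Flow

section Walk

variable [NeZero L]

lemma hcGraph_adj_iff {x v : Finset (Fin L)} :
    (hcGraph L).Adj x v ↔ ∃ a, (a ∈ x ↔ a + 1 ∉ x) ∧ v = symmDiff x {a, a + 1} := by
  have hsymm : ∀ D, symmDiff x v = D ↔ v = symmDiff x D := fun D => by
    constructor <;> rintro rfl <;> simp [symmDiff_symmDiff_cancel_left]
  simp only [hcGraph, Nat.cast_one, hsymm]
  constructor
  · rintro ⟨hcard, a, rfl⟩
    exact ⟨a, (x.card_symmDiff_pair_eq_iff a (a + 1)).1 hcard.symm, rfl⟩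
  · rintro ⟨a, ha, rfl⟩
    exact ⟨((x.card_symmDiff_pair_eq_iff a (a + 1)).2 ha).symm, a, rfl⟩

lemma exists_adj_isFlow_lt {x y : Finset (Fin L)} {J : Fin L → ℤ}
    (hJ : IsFlow (charge x - charge y) J) {i₀ i₁ i₂ : Fin L} (h₀ : J i₀ ≠ 0)
    (h₁ : J i₁ ≤ 0) (h₂ : 0 ≤ J i₂) :
    ∃ v, (hcGraph L).Adj x v ∧
      ∃ J', IsFlow (charge v - charge y) J' ∧ ∑ i, (J' i).natAbs < ∑ i, (J i).natAbs := by
  rcases h₀.lt_or_gt with hneg | hpos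
  · obtain ⟨a, ha, ha', hJa⟩ :=
      exists_notMem_add_one_mem_of_isFlow hJ (by omega : J i₀ ≤ -1) h₂
    refine ⟨symmDiff x {a, a + 1}, hcGraph_adj_iff.2 ⟨a, by simp [ha, ha'], rfl⟩,
      J + Pi.single a 1, ?_, sum_natAbs_add_single_lt (by omega)⟩
    rw [pair_comm, charge_symmDiff_pair ha' ha]
    convert hJ.add (isFlow_single a) using 1
    abel
  · obtain ⟨a, ha, ha', hJa⟩ :=
      exists_mem_add_one_notMem_of_isFlow hJ (by omega : 1 ≤ J i₀) h₁
    refine ⟨symmDiff x {a, a + 1}, hcGraph_adj_iff.2 ⟨a, by simp [ha, ha'], rfl⟩,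
      J + Pi.single a (-1), ?_, sum_natAbs_add_single_lt (by omega)⟩
    rw [charge_symmDiff_pair ha ha', Pi.single_neg, ← sub_eq_add_neg]
    convert hJ.sub (isFlow_single a) using 1
    abel

theorem exists_walk_length_le_of_isFlow {x y : Finset (Fin L)} {J : Fin L → ℤ}
    (hJ : IsFlow (charge x - charge y) J) :
    ∃ p : (hcGraph L).Walk x y, p.length ≤ ∑ i, (J i).natAbs := by
  induction h : ∑ i, (J i).natAbs using Nat.strong_induction_on generalizing x J with
  | _ n ih =>
  subst h
  -- a flow of constant sign is improved by a constant shift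
  by_cases hpos : ∀ i, 1 ≤ J i
  · obtain ⟨p, hp⟩ := ih _ (sum_lt_sum_of_nonempty univ_nonempty
      fun i _ => by have := hpos i; omega) (hJ.add_const (-1)) rfl
    exact ⟨p, hp.trans (sum_le_sum fun i _ => by have := hpos i; omega)⟩
  by_cases hneg : ∀ i, J i ≤ -1
  · obtain ⟨p, hp⟩ := ih _ (sum_lt_sum_of_nonempty univ_nonempty
      fun i _ => by have := hneg i; omega) (hJ.add_const 1) rfl
    exact ⟨p, hp.trans (sum_le_sum fun i _ => by have := hneg i; omega)⟩
  by_cases hzero : ∀ i, J i = 0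
  · obtain rfl : x = y := charge_injective (sub_eq_zero.1 (funext fun i => by
      simpa [hzero] using (hJ i).symm))
    exact ⟨.nil, Nat.zero_le _⟩
  push Not at hpos hneg hzero
  obtain ⟨i₀, hi₀⟩ := hzero
  obtain ⟨i₁, hi₁⟩ := hpos
  obtain ⟨i₂, hi₂⟩ := hneg
  obtain ⟨v, hadj, J', hJ', hlt⟩ :=
    exists_adj_isFlow_lt hJ hi₀ (i₁ := i₁) (by omega) (i₂ := i₂) (by omega)
  obtain ⟨p, hp⟩ := ih _ hlt hJ' rfl
  exact ⟨.cons hadj p, by rw [SimpleGraph.Walk.length_cons]; omega⟩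

lemma dN_le_matchingCost {N : ℕ} {x y : Finset (Fin L)} (hx : x.card = N) (hy : y.card = N)
    (σ : Equiv.Perm (Fin N)) : dN L x y ≤ matchingCost x y hx hy σ := by
  obtain ⟨J, hJ, hcost⟩ := exists_isFlow_le_matchingCost hx hy σ
  obtain ⟨p, hp⟩ := exists_walk_length_le_of_isFlow hJ
  exact (SimpleGraph.dist_le p).trans (hp.trans hcost)

end Walk

def IsRotation {N : ℕ} (σ : Equiv.Perm (Fin N)) : Prop := ∃ t, ∀ j, σ j = j + t

lemma IsRotation.trans {N : ℕ} {σ τ : Equiv.Perm (Fin N)} (hσ : IsRotation σ)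
    (hτ : IsRotation τ) : IsRotation (σ.trans τ) := by
  obtain ⟨r, hr⟩ := hσ
  obtain ⟨t, ht⟩ := hτ
  exact ⟨r + t, fun j => by rw [Equiv.trans_apply, hr, ht, add_assoc]⟩

section Rotation

variable [NeZero L]

lemma matchingCost_refl {N : ℕ} (x : Finset (Fin L)) (hx : x.card = N) :
    matchingCost x x hx hx (Equiv.refl _) = 0 :=
  sum_eq_zero fun _ _ => cycDist_self _

lemma matchingCost_trans_le {N : ℕ} {x y z : Finset (Fin L)} (hx : x.card = N) (hy : y.card = N)
    (hz : z.card = N) (σ τ : Equiv.Perm (Fin N)) :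
    matchingCost x z hx hz (σ.trans τ) ≤
      matchingCost x y hx hy σ + matchingCost y z hy hz τ := by
  unfold matchingCost
  calc _ ≤ ∑ j, (cycDist (x.orderEmbOfFin hx j) (y.orderEmbOfFin hy (σ j)) +
        cycDist (y.orderEmbOfFin hy (σ j)) (z.orderEmbOfFin hz (τ (σ j)))) :=
        sum_le_sum fun j _ => cycDist_triangle _ _ _
    _ = _ := by
        rw [sum_add_distrib,
          Equiv.sum_comp σ fun k => cycDist (y.orderEmbOfFin hy k) (z.orderEmbOfFin hz (τ k))]

lemma orderEmbOfFin_symmDiff_pair_eq_swap {N : ℕ} {x v : Finset (Fin L)} {a : Fin L}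
    (hxv : v = symmDiff x {a, a + 1}) (ha : a ∈ x) (ha' : a + 1 ∉ x)
    (hval : (a + 1).val = a.val + 1) (hx : x.card = N) (hv : v.card = N) (j : Fin N) :
    v.orderEmbOfFin hv j = Equiv.swap a (a + 1) (x.orderEmbOfFin hx j) := by
  subst hxv
  set f := x.orderEmbOfFin hx
  have hfx : ∀ j, f j ∈ x := x.orderEmbOfFin_mem hx
  have hval' : ∀ k, (Equiv.swap a (a + 1) (f k)).val =
      if f k = a then a.val + 1 else (f k).val := fun k => by
    split_ifs with h
    · rw [h, Equiv.swap_apply_left, hval]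
    · rw [Equiv.swap_apply_of_ne_of_ne h fun h' : f k = a + 1 => ha' (h' ▸ hfx k)]
  have hne : ∀ k, (f k).val ≠ a.val + 1 := fun k h =>
    ha' (Fin.ext (h.trans hval.symm) ▸ hfx k)
  have hmono : StrictMono fun j => Equiv.swap a (a + 1) (f j) := fun i j hij => by
    have hlt := Fin.lt_def.1 (f.strictMono hij)
    have := hne i
    have := hne j
    rw [Fin.lt_def, hval', hval']
    split_ifs with h1 h2 h2 <;> simp only [Fin.ext_iff] at h1 h2 <;> omega
  rw [← orderEmbOfFin_unique hv (fun j => swap_mem_symmDiff_pair ha ha' (hfx j)) hmono]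

lemma orderEmbOfFin_symmDiff_last_add_one {m n : ℕ} {x v : Finset (Fin (m + 1))}
    (hxv : v = symmDiff x {Fin.last m, Fin.last m + 1}) (ha : Fin.last m ∈ x)
    (ha' : Fin.last m + 1 ∉ x) (hx : x.card = n + 1) (hv : v.card = n + 1) (j : Fin (n + 1)) :
    v.orderEmbOfFin hv (j + 1) =
      Equiv.swap (Fin.last m) (Fin.last m + 1) (x.orderEmbOfFin hx j) := by
  subst hxv
  set f := x.orderEmbOfFin hx
  have hfx : ∀ j, f j ∈ x := x.orderEmbOfFin_mem hx
  have hfa : ∀ j, f j = Fin.last m → j = Fin.last n := fun j h => by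
    by_contra hj
    exact (f.strictMono (lt_of_le_of_ne (Fin.le_last j) hj)).not_ge (h ▸ Fin.le_last _)
  have hfl : f (Fin.last n) = Fin.last m := by
    obtain ⟨k, hk⟩ : Fin.last m ∈ Set.range f := by rwa [x.range_orderEmbOfFin hx]
    rwa [hfa k hk] at hk
  have hfix : ∀ i : Fin n,
      Equiv.swap (Fin.last m) (Fin.last m + 1) (f i.castSucc) = f i.castSucc :=
    fun i => Equiv.swap_apply_of_ne_of_ne (fun h => (Fin.castSucc_lt_last i).ne (hfa _ h))
      fun h => ha' (h ▸ hfx _)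
  -- `Fin.last m + 1 = 0` becomes the least element, so the labels rotate by one
  set h : Fin (n + 1) → Fin (m + 1) := Fin.cons 0 fun i => f i.castSucc
  have hmono : StrictMono h := Fin.strictMono_cons.2
    ⟨fun i => Fin.pos_iff_ne_zero.2 fun h => ha' (Fin.last_add_one m ▸ h ▸ hfx _),
      f.strictMono.comp Fin.strictMono_castSucc⟩
  have hmem : ∀ k, h k ∈ symmDiff x {Fin.last m, Fin.last m + 1} := Fin.cases
    (by simpa [h, hfl, Fin.last_add_one] using swap_mem_symmDiff_pair ha ha' (hfx (Fin.last n)))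
    fun i => by
      simpa only [h, Fin.cons_succ, hfix] using swap_mem_symmDiff_pair ha ha' (hfx i.castSucc)
  rw [← orderEmbOfFin_unique hv hmem hmono]
  refine Fin.lastCases ?_ (fun i => ?_) j
  · rw [Fin.last_add_one n, hfl, Equiv.swap_apply_left]
    exact (Fin.last_add_one m).symm
  · rw [Fin.coeSucc_eq_succ, hfix]
    rfl

lemma exists_orderEmbOfFin_add_eq_swap_of_mem {N : ℕ} {x v : Finset (Fin L)} {a : Fin L}
    (hxv : v = symmDiff x {a, a + 1}) (ha : a ∈ x) (ha' : a + 1 ∉ x) (hx : x.card = N)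
    (hv : v.card = N) :
    ∃ r, ∀ j, v.orderEmbOfFin hv (j + r) = Equiv.swap a (a + 1) (x.orderEmbOfFin hx j) := by
  obtain ⟨m, rfl⟩ := Nat.exists_eq_add_one_of_ne_zero (NeZero.ne L)
  obtain ⟨n, rfl⟩ : ∃ n, N = n + 1 :=
    Nat.exists_eq_add_one_of_ne_zero (by rintro rfl; simp_all)
  rcases eq_or_ne a (Fin.last m) with rfl | hlast
  · exact ⟨1, orderEmbOfFin_symmDiff_last_add_one hxv ha ha' hx hv⟩
  · refine ⟨0, fun j => ?_⟩
    rw [add_zero]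
    exact orderEmbOfFin_symmDiff_pair_eq_swap hxv ha ha'
      (by rw [Fin.val_add_one, if_neg hlast]) hx hv j

lemma exists_orderEmbOfFin_add_eq_swap {N : ℕ} [NeZero N] {x v : Finset (Fin L)} {a : Fin L}
    (hxv : v = symmDiff x {a, a + 1}) (ha : a ∈ x ↔ a + 1 ∉ x) (hx : x.card = N)
    (hv : v.card = N) :
    ∃ r, ∀ j, v.orderEmbOfFin hv (j + r) = Equiv.swap a (a + 1) (x.orderEmbOfFin hx j) := by
  by_cases hax : a ∈ x
  · exact exists_orderEmbOfFin_add_eq_swap_of_mem hxv hax (ha.1 hax) hx hv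
  -- otherwise `x` arises from `v` by the move of the particle at `a`
  have hax' : a + 1 ∈ x := by tauto
  have hvx : x = symmDiff v {a, a + 1} := by rw [hxv, symmDiff_symmDiff_cancel_right]
  obtain ⟨r, hr⟩ := exists_orderEmbOfFin_add_eq_swap_of_mem hvx
    (by simp [hxv, mem_symmDiff, hax]) (by simp [hxv, mem_symmDiff, hax']) hv hx
  refine ⟨-r, fun j => ?_⟩
  have := hr (j + -r)
  rw [neg_add_cancel_right] at this
  rw [this, Equiv.swap_apply_self]

lemma sum_cycDist_swap_le_one {N : ℕ} {x : Finset (Fin L)} (hx : x.card = N) {a : Fin L}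
    (ha : a ∈ x ↔ a + 1 ∉ x) :
    ∑ j, cycDist (x.orderEmbOfFin hx j) (Equiv.swap a (a + 1) (x.orderEmbOfFin hx j)) ≤ 1 := by
  rw [x.sum_orderEmbOfFin hx fun z => cycDist z (Equiv.swap a (a + 1) z)]
  have hfix : ∀ z ∈ x, z ≠ a → z ≠ a + 1 → cycDist z (Equiv.swap a (a + 1) z) = 0 :=
    fun z _ h h' => by rw [Equiv.swap_apply_of_ne_of_ne h h', cycDist_self]
  by_cases hax : a ∈ x
  · rw [← add_sum_erase x _ hax, Equiv.swap_apply_left, sum_eq_zero fun z hz => hfix z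
      (mem_of_mem_erase hz) (ne_of_mem_erase hz) fun h => ha.1 hax (h ▸ mem_of_mem_erase hz)]
    exact cycDist_add_one_le a
  · have hax' : a + 1 ∈ x := by tauto
    rw [← add_sum_erase x _ hax', Equiv.swap_apply_right, sum_eq_zero fun z hz => hfix z
      (mem_of_mem_erase hz) (fun h => hax (h ▸ mem_of_mem_erase hz)) (ne_of_mem_erase hz),
      cycDist_comm]
    exact cycDist_add_one_le a

lemma exists_isRotation_matchingCost_le_one_of_adj {N : ℕ} [NeZero N] {x v : Finset (Fin L)}
    (hadj : (hcGraph L).Adj x v) (hx : x.card = N) (hv : v.card = N) :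
    ∃ σ, IsRotation σ ∧ matchingCost x v hx hv σ ≤ 1 := by
  obtain ⟨a, ha, hxv⟩ := hcGraph_adj_iff.1 hadj
  obtain ⟨r, hr⟩ := exists_orderEmbOfFin_add_eq_swap hxv ha hx hv
  refine ⟨Equiv.addRight r, ⟨r, fun _ => rfl⟩, ?_⟩
  simp only [matchingCost, Equiv.coe_addRight, hr]
  exact sum_cycDist_swap_le_one hx ha

theorem exists_isRotation_matchingCost_le_length {N : ℕ} [NeZero N] {x y : Finset (Fin L)}
    (p : (hcGraph L).Walk x y) (hx : x.card = N) (hy : y.card = N) :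
    ∃ σ, IsRotation σ ∧ matchingCost x y hx hy σ ≤ p.length := by
  induction p with
  | nil =>
    exact ⟨Equiv.refl _, ⟨0, fun j => (add_zero j).symm⟩, (matchingCost_refl _ hx).le⟩
  | cons hadj q ih =>
    have hv := hadj.1 ▸ hx
    obtain ⟨σ, hσ, h₁⟩ := exists_isRotation_matchingCost_le_one_of_adj hadj hx hv
    obtain ⟨τ, hτ, h₂⟩ := ih hv hy
    refine ⟨σ.trans τ, hσ.trans hτ, (matchingCost_trans_le hx hv hy σ τ).trans ?_⟩
    rw [SimpleGraph.Walk.length_cons]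
    omega

lemma exists_isRotation_matchingCost_le_dN {N : ℕ} [NeZero N] {x y : Finset (Fin L)}
    (hx : x.card = N) (hy : y.card = N) :
    ∃ σ, IsRotation σ ∧ matchingCost x y hx hy σ ≤ dN L x y := by
  obtain ⟨J, hJ, -⟩ := exists_isFlow_le_matchingCost hx hy 1
  obtain ⟨p, hp⟩ :=
    (exists_walk_length_le_of_isFlow hJ).choose.reachable.exists_walk_length_eq_dist
  obtain ⟨σ, hσ, hle⟩ := exists_isRotation_matchingCost_le_length p hx hy
  exact ⟨σ, hσ, hle.trans_eq hp⟩

end Rotation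

theorem dist_eq_min_cyclic_general (L N : ℕ) [NeZero L]
    (x y : Finset (Fin L)) (hx : x.card = N) (hy : y.card = N) :
    dN L x y =
      sInf {s : ℕ | ∃ σ : Equiv.Perm (Fin N), (∃ t : Fin N, ∀ j, σ j = j + t) ∧
        s = ∑ j : Fin N, cycDist (x.orderEmbOfFin hx j) (y.orderEmbOfFin hy (σ j))} ∧
    sInf {s : ℕ | ∃ σ : Equiv.Perm (Fin N), (∃ t : Fin N, ∀ j, σ j = j + t) ∧
        s = ∑ j : Fin N, cycDist (x.orderEmbOfFin hx j) (y.orderEmbOfFin hy (σ j))} =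
      sInf {s : ℕ | ∃ σ : Equiv.Perm (Fin N),
        s = ∑ j : Fin N, cycDist (x.orderEmbOfFin hx j) (y.orderEmbOfFin hy (σ j))} := by
  change dN L x y = sInf {s | ∃ σ, IsRotation σ ∧ s = matchingCost x y hx hy σ} ∧
    sInf {s | ∃ σ, IsRotation σ ∧ s = matchingCost x y hx hy σ} =
      sInf {s | ∃ σ, s = matchingCost x y hx hy σ}
  set A := {s | ∃ σ, IsRotation σ ∧ s = matchingCost x y hx hy σ}
  set B := {s | ∃ σ, s = matchingCost x y hx hy σ}
  have hdB : dN L x y ≤ sInf B :=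
    le_csInf ⟨_, 1, rfl⟩ fun _ ⟨σ, hs⟩ => hs ▸ dN_le_matchingCost hx hy σ
  rcases N.eq_zero_or_pos with rfl | hN
  · have hA : A = ∅ := Set.eq_empty_of_forall_notMem fun _ ⟨_, ⟨t, _⟩, _⟩ => t.elim0
    have hB : sInf B = 0 := Nat.eq_zero_of_le_zero (Nat.sInf_le ⟨1, rfl⟩)
    rw [hA, Nat.sInf_empty, hB]
    exact ⟨by omega, rfl⟩
  have : NeZero N := ⟨hN.ne'⟩
  obtain ⟨σ, hσ, hle⟩ := exists_isRotation_matchingCost_le_dN hx hy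
  have hAd : sInf A ≤ dN L x y := (Nat.sInf_le (s := A) ⟨σ, hσ, rfl⟩).trans hle
  have hBA : sInf B ≤ sInf A :=
    csInf_le_csInf (OrderBot.bddBelow B) ⟨_, σ, hσ, rfl⟩ fun _ ⟨τ, _, hs⟩ => ⟨τ, hs⟩
  omega

/-- The hard-core graph distance on the ring is the minimum over cyclic permutations
of the summed single-particle cycle distances, and this minimum coincides with the
minimum over all permutations. -/
theorem dist_eq_min_cyclic (L N : ℕ) [NeZero L] (hN : N < L)
    (x y : Finset (Fin L)) (hx : x.card = N) (hy : y.card = N) :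
    dN L x y =
      sInf {s : ℕ | ∃ σ : Equiv.Perm (Fin N), (∃ t : Fin N, ∀ j, σ j = j + t) ∧
        s = ∑ j : Fin N, cycDist (x.orderEmbOfFin hx j) (y.orderEmbOfFin hy (σ j))} ∧
    sInf {s : ℕ | ∃ σ : Equiv.Perm (Fin N), (∃ t : Fin N, ∀ j, σ j = j + t) ∧
        s = ∑ j : Fin N, cycDist (x.orderEmbOfFin hx j) (y.orderEmbOfFin hy (σ j))} =
      sInf {s : ℕ | ∃ σ : Equiv.Perm (Fin N),
        s = ∑ j : Fin N, cycDist (x.orderEmbOfFin hx j) (y.orderEmbOfFin hy (σ j))} :=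
  dist_eq_min_cyclic_general L N x y hx hy
end
end

section
/- On the infinite line, for N hard-core particles the configuration graph distance between x = {x_1 < ... < x_N} and y = {y_1 < ... < y_N} (subsets of ℤ of size N) equals Σ_{j=1}^N |x_j − y_j|. -/
open Finset
open scoped Classical

noncomputable section

/-- Hard-core configuration graph on the infinite line `ℤ`. -/
def lineGraph : SimpleGraph (Finset ℤ) where
  Adj x y := x.card = y.card ∧ ∃ j : ℤ, symmDiff x y = {j, j + 1}
  symm := by
    constructor
    rintro x y ⟨h1, j, h2⟩
    refine ⟨h1.symm, j, ?_⟩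
    rw [symmDiff_comm]
    exact h2
  loopless := by
    constructor
    rintro x ⟨-, j, h2⟩
    have hj : j ∈ symmDiff x x := by rw [h2]; simp
    rw [symmDiff_self] at hj
    simp at hj

/-- Graph distance `d^N` on the line configuration graph. -/
def dZ (x y : Finset ℤ) : ℕ := lineGraph.dist x y

/-- The droplet of `N` consecutive integers centred at `m`. -/
def dropletZ (N : ℕ) (m : ℤ) : Finset ℤ :=
  (Finset.range N).image fun i => m - (((N - 1) / 2 : ℕ) : ℤ) + (i : ℤ)

/-- Distance of a configuration to the set of droplets on the line. -/
def distDropZ (N : ℕ) (x : Finset ℤ) : ℕ :=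
  sInf (Set.range fun m : ℤ => dZ x (dropletZ N m))

/-- Centres of droplets closest to `x` on the line. -/
def WZ (N : ℕ) (x : Finset ℤ) : Set ℤ :=
  {m : ℤ | dZ x (dropletZ N m) = distDropZ N x}

/-
Moving one particle one step changes exactly one coordinate of the increasing enumeration, by
one, so the ℓ¹ distance between the enumerations is at most the graph distance. Conversely, if
some `x_j < y_j`, take the largest such `j`: the site `x_j + 1` is free (a particle there would be
some `x_k` with `k > j` and `x_k ≤ y_j < y_k`), and moving the particle at `x_j` there decreases
the ℓ¹ distance by one. Since the ℓ¹ distance is symmetric, this yields a walk of that length.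
-/

open Function

lemma sum_natAbs_update_sub_add {ι : Type*} [Fintype ι] [DecidableEq ι] (f g : ι → ℤ)
    (j : ι) (c : ℤ) :
    ∑ k, (update f j c k - g k).natAbs + (f j - g j).natAbs
      = ∑ k, (f k - g k).natAbs + (c - g j).natAbs := by
  have hupd : (fun k => (update f j c k - g k).natAbs)
      = update (fun k => (f k - g k).natAbs) j (c - g j).natAbs := by
    ext k
    rcases eq_or_ne k j with rfl | hk <;> simp [*]
  rw [hupd, sum_update_of_mem (mem_univ j), ← add_sum_erase _ _ (mem_univ j),
    sdiff_singleton_eq_erase]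
  ring

def moveRight (x : Finset ℤ) (a : ℤ) : Finset ℤ := insert (a + 1) (x.erase a)

lemma card_moveRight {x : Finset ℤ} {a : ℤ} (ha : a ∈ x) (hfree : a + 1 ∉ x) :
    (moveRight x a).card = x.card := by
  rw [moveRight, card_insert_of_notMem (fun h => hfree (mem_erase.1 h).2), card_erase_add_one ha]

lemma lineGraph_adj_moveRight {x : Finset ℤ} {a : ℤ} (ha : a ∈ x) (hfree : a + 1 ∉ x) :
    lineGraph.Adj x (moveRight x a) := by
  refine ⟨(card_moveRight ha hfree).symm, a, ?_⟩
  ext b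
  simp only [moveRight, mem_symmDiff, mem_insert, mem_erase, mem_singleton]
  by_cases hba : b = a
  · subst hba; simp [ha]
  · by_cases hba1 : b = a + 1
    · subst hba1; simp [hfree]
    · simp [hba, hba1]

lemma exists_moveRight_of_lineGraph_adj {x z : Finset ℤ} (h : lineGraph.Adj x z) :
    ∃ a, (a ∈ x ∧ a + 1 ∉ x ∧ z = moveRight x a) ∨
      (a ∈ z ∧ a + 1 ∉ z ∧ x = moveRight z a) := by
  obtain ⟨hc, a, hs⟩ := h
  wlog hax : a ∈ x generalizing x z
  · have haz : a ∈ z := by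
      have : a ∈ symmDiff x z := by simp [hs]
      simpa [mem_symmDiff, hax] using this
    obtain ⟨b, hb⟩ := this hc.symm (by rwa [symmDiff_comm]) haz
    exact ⟨b, hb.symm⟩
  have hmem : ∀ b, (b ∈ x ∧ b ∉ z ∨ b ∈ z ∧ b ∉ x) ↔ b = a ∨ b = a + 1 := by
    intro b
    rw [← mem_symmDiff, hs]
    simp
  have haz : a ∉ z := fun h => by have := hmem a; tauto
  have hfree : a + 1 ∉ x := by
    intro ha1x
    have hzx : z ⊆ x := fun b hbz => by
      by_contra hbx
      rcases (hmem b).1 (Or.inr ⟨hbz, hbx⟩) with rfl | rfl <;> contradiction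
    exact haz (eq_of_subset_of_card_le hzx hc.le ▸ hax)
  refine ⟨a, Or.inl ⟨hax, hfree, ?_⟩⟩
  ext b
  have hb := hmem b
  simp only [moveRight, mem_insert, mem_erase]
  by_cases hba : b = a
  · subst hba; simp [haz]
  · by_cases hba1 : b = a + 1
    · subst hba1; simp only [true_or, iff_true]; tauto
    · simp only [hba, hba1, false_or, or_false, ne_eq, not_false_eq_true, true_and] at hb ⊢
      tauto

lemma orderEmbOfFin_moveRight {N : ℕ} {x : Finset ℤ} (hx : x.card = N) (j : Fin N)
    (hfree : x.orderEmbOfFin hx j + 1 ∉ x) (hx' : (moveRight x (x.orderEmbOfFin hx j)).card = N) :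
    ⇑((moveRight x (x.orderEmbOfFin hx j)).orderEmbOfFin hx')
      = update (x.orderEmbOfFin hx) j (x.orderEmbOfFin hx j + 1) := by
  have hmem := x.orderEmbOfFin_mem hx
  refine (orderEmbOfFin_unique hx' (fun k => ?_) fun k l hkl => ?_).symm
  · rcases eq_or_ne k j with rfl | hk
    · simp [moveRight]
    · simp [moveRight, hk, hmem k]
  · have hlt := (x.orderEmbOfFin hx).strictMono hkl
    rcases eq_or_ne k j with rfl | hk
    · have hne : x.orderEmbOfFin hx l ≠ x.orderEmbOfFin hx k + 1 := fun h => hfree (h ▸ hmem l)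
      simp only [update_self, update_of_ne hkl.ne']
      omega
    · rcases eq_or_ne l j with rfl | hl
      · simp only [update_self, update_of_ne hk]
        omega
      · simpa only [update_of_ne hk, update_of_ne hl] using hlt

def sortedDist {N : ℕ} (x y : Finset ℤ) (hx : x.card = N) (hy : y.card = N) : ℕ :=
  ∑ k, (x.orderEmbOfFin hx k - y.orderEmbOfFin hy k).natAbs

section sortedDist

variable {N : ℕ} {x y : Finset ℤ}

lemma sortedDist_comm (hx : x.card = N) (hy : y.card = N) :
    sortedDist x y hx hy = sortedDist y x hy hx :=
  sum_congr rfl fun k _ => by omega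

lemma eq_of_sortedDist_eq_zero {hx : x.card = N} {hy : y.card = N}
    (h : sortedDist x y hx hy = 0) : x = y := by
  have hxy : ⇑(x.orderEmbOfFin hx) = y.orderEmbOfFin hy := by
    ext k
    have := (sum_eq_zero_iff.1 h) k (mem_univ k)
    omega
  rw [← coe_inj, ← range_orderEmbOfFin x hx, ← range_orderEmbOfFin y hy, hxy]

lemma sortedDist_moveRight_add (hx : x.card = N) (hy : y.card = N) (j : Fin N)
    (hfree : x.orderEmbOfFin hx j + 1 ∉ x) (hx' : (moveRight x (x.orderEmbOfFin hx j)).card = N) :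
    sortedDist (moveRight x (x.orderEmbOfFin hx j)) y hx' hy
        + (x.orderEmbOfFin hx j - y.orderEmbOfFin hy j).natAbs
      = sortedDist x y hx hy + (x.orderEmbOfFin hx j + 1 - y.orderEmbOfFin hy j).natAbs := by
  rw [sortedDist, sortedDist, orderEmbOfFin_moveRight hx j hfree hx']
  exact sum_natAbs_update_sub_add _ _ j _

lemma sortedDist_le_sortedDist_add_one {z : Finset ℤ} (hxz : lineGraph.Adj x z)
    (hx : x.card = N) (hz : z.card = N) (hy : y.card = N) :
    sortedDist x y hx hy ≤ sortedDist z y hz hy + 1 := by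
  obtain ⟨a, ⟨ha, hfree, rfl⟩ | ⟨ha, hfree, rfl⟩⟩ :=
    exists_moveRight_of_lineGraph_adj hxz
  · obtain ⟨j, rfl⟩ : a ∈ Set.range (x.orderEmbOfFin hx) := by rwa [range_orderEmbOfFin]
    have := sortedDist_moveRight_add hx hy j hfree hz
    omega
  · obtain ⟨j, rfl⟩ : a ∈ Set.range (z.orderEmbOfFin hz) := by rwa [range_orderEmbOfFin]
    have := sortedDist_moveRight_add hz hy j hfree hx
    omega

lemma exists_lineGraph_adj_sortedDist_add_one (hx : x.card = N) (hy : y.card = N)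
    (h : ∃ j, x.orderEmbOfFin hx j < y.orderEmbOfFin hy j) :
    ∃ (x' : Finset ℤ) (hx' : x'.card = N),
      lineGraph.Adj x x' ∧ sortedDist x' y hx' hy + 1 = sortedDist x y hx hy := by
  obtain ⟨j₀, hj₀⟩ := h
  obtain ⟨j, hj, hmax⟩ := (univ.filter fun k => x.orderEmbOfFin hx k < y.orderEmbOfFin hy k)
    |>.exists_max_image id ⟨j₀, by simpa using hj₀⟩
  rw [mem_filter] at hj
  have hfree : x.orderEmbOfFin hx j + 1 ∉ x := by
    intro hmem
    obtain ⟨k, hk⟩ : _ ∈ Set.range (x.orderEmbOfFin hx) := by rwa [range_orderEmbOfFin]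
    have hjk : j < k := (x.orderEmbOfFin hx).lt_iff_lt.1 (by omega)
    have hyk := (y.orderEmbOfFin hy).strictMono hjk
    exact (hmax k (mem_filter.2 ⟨mem_univ k, by omega⟩)).not_gt hjk
  have hmem := x.orderEmbOfFin_mem hx j
  have hx' := (card_moveRight hmem hfree).trans hx
  refine ⟨_, hx', lineGraph_adj_moveRight hmem hfree, ?_⟩
  have := sortedDist_moveRight_add hx hy j hfree hx'
  omega

lemma sortedDist_le_length (w : lineGraph.Walk x y) (hx : x.card = N) (hy : y.card = N) :
    sortedDist x y hx hy ≤ w.length := by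
  induction w with
  | nil => simp [sortedDist]
  | @cons u v _ huv p ih =>
    have hv : v.card = N := huv.1.symm.trans hx
    calc sortedDist u _ hx hy ≤ sortedDist v _ hv hy + 1 :=
          sortedDist_le_sortedDist_add_one huv hx hv hy
      _ ≤ (SimpleGraph.Walk.cons huv p).length := by
          rw [SimpleGraph.Walk.length_cons]
          exact Nat.add_le_add_right (ih hv hy) 1

lemma exists_walk_length_le_sortedDist (hx : x.card = N) (hy : y.card = N) :
    ∃ w : lineGraph.Walk x y, w.length ≤ sortedDist x y hx hy := by
  generalize hn : sortedDist x y hx hy = n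
  induction n generalizing x y with
  | zero =>
    obtain rfl := eq_of_sortedDist_eq_zero hn
    exact ⟨.nil, le_rfl⟩
  | succ n ih =>
    wlog hlt : ∃ j, x.orderEmbOfFin hx j < y.orderEmbOfFin hy j generalizing x y
    · have hgt : ∃ j, y.orderEmbOfFin hy j < x.orderEmbOfFin hx j := by
        by_contra hgt
        simp only [not_exists, not_lt] at hlt hgt
        have : sortedDist x y hx hy = 0 :=
          sum_eq_zero fun k _ => by have := hlt k; have := hgt k; omega
        omega
      obtain ⟨w, hw⟩ := this hy hx ((sortedDist_comm hy hx).trans hn) hgt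
      exact ⟨w.reverse, by rwa [SimpleGraph.Walk.length_reverse]⟩
    obtain ⟨x', hx', hadj, hsum⟩ := exists_lineGraph_adj_sortedDist_add_one hx hy hlt
    obtain ⟨w, hw⟩ := ih hx' hy (by omega)
    exact ⟨.cons hadj w, by rw [SimpleGraph.Walk.length_cons]; omega⟩

end sortedDist

/-- On the infinite line, the hard-core configuration graph distance between two `N`-element
configurations is the sum of the distances of corresponding particles in increasing order. -/
theorem line_dist_eq_sum (N : ℕ) (x y : Finset ℤ) (hx : x.card = N) (hy : y.card = N) :
    dZ x y = ∑ j : Fin N, (x.orderEmbOfFin hx j - y.orderEmbOfFin hy j).natAbs := by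
  obtain ⟨w, hw⟩ := exists_walk_length_le_sortedDist hx hy
  obtain ⟨p, hp⟩ := SimpleGraph.Reachable.exists_walk_length_eq_dist ⟨w⟩
  exact le_antisymm ((SimpleGraph.dist_le w).trans hw)
    ((sortedDist_le_length p hx hy).trans hp.le)
end
end

section
/- Let N < L/2 and μ ≥ ln 2. Then Σ_{x ∈ 𝒱_L^N} exp(−μ · d_L^N(x, 𝒱_{L,1}^N)) ≤ L(1 + 2^9 e^{−μ}), where the sum runs over all N-particle configurations on the cycle of length L and d_L^N(x, 𝒱_{L,1}^N) is the hard-core graph distance from x to the set of droplet (cluster) configurations. -/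
open Finset
open scoped Classical
open Fin.NatCast

noncomputable section

/-!
Fix a droplet `c`. Weight each site by its distance to the boundary of `c` (`arcProfile`).
The weighted size `Φ(x)` of `x ∆ c` changes by at most one along an edge of the configuration
graph, and this graph is connected on `N`-sets (particles can always be slid towards a fixed
site), so `Φ(x) ≤ d(x, c)`. Summing over all subsets, `∑ₓ 2^{-Φ(x)} ≤ ∏ₛ (1 + 2^{-w(s)})`, and
this product is at most `4e⁴ < 2⁸` since each of the four ends of the profile contributes a
product `∏ᵢ (1 + 2^{-i})`. With `e^{-μ} ≤ 1/2` this bounds `∑_{x ≠ c} e^{-μ d(x, c)}` by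
`2⁹ e^{-μ}`. Bounding `e^{-μ d(x, 𝒱)}` by the sum over the `L` droplets finishes the proof.
-/

namespace HardCore

open Fin.CommRing

lemma one_add_pow_min_le {q : ℝ} (hq : 0 ≤ q) (m n : ℕ) :
    1 + q ^ min m n ≤ (1 + q ^ m) * (1 + q ^ n) := by
  have hm := pow_nonneg hq m
  have hn := pow_nonneg hq n
  rcases min_choice m n with h | h <;> rw [h] <;> nlinarith

lemma prod_one_add_pow_min_le {ι : Type*} {q : ℝ} (hq : 0 ≤ q) (s : Finset ι) (f g : ι → ℕ) :
    ∏ i ∈ s, (1 + q ^ min (f i) (g i)) ≤ (∏ i ∈ s, (1 + q ^ f i)) * ∏ i ∈ s, (1 + q ^ g i) := by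
  rw [← Finset.prod_mul_distrib]
  exact Finset.prod_le_prod (fun i _ => by positivity) fun i _ => one_add_pow_min_le hq _ _

lemma prod_one_add_half_pow_succ_le (n : ℕ) :
    ∏ i ∈ Finset.range n, (1 + (1 / 2 : ℝ) ^ (i + 1)) ≤ Real.exp 1 := by
  calc ∏ i ∈ Finset.range n, (1 + (1 / 2 : ℝ) ^ (i + 1))
      ≤ ∏ i ∈ Finset.range n, Real.exp ((1 / 2 : ℝ) ^ (i + 1)) :=
        Finset.prod_le_prod (fun i _ => by positivity) fun i _ => by
          linarith [Real.add_one_le_exp ((1 / 2 : ℝ) ^ (i + 1))]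
    _ = Real.exp (1 / 2 * ∑ i ∈ Finset.range n, (1 / 2 : ℝ) ^ i) := by
        rw [← Real.exp_sum, Finset.mul_sum]
        simp only [pow_succ']
    _ ≤ Real.exp 1 := by
        have := sum_geometric_two_le n
        gcongr
        linarith

lemma prod_one_add_half_pow_le (n : ℕ) :
    ∏ i ∈ Finset.range n, (1 + (1 / 2 : ℝ) ^ i) ≤ 2 * Real.exp 1 := by
  cases n with
  | zero => rw [Finset.prod_range_zero]; linarith [Real.add_one_le_exp 1]
  | succ n =>
    rw [Finset.prod_range_succ', pow_zero, mul_comm]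
    gcongr
    · norm_num
    · exact prod_one_add_half_pow_succ_le n

lemma exp_neg_mul_le_half_pow {μ : ℝ} (hμ : Real.log 2 ≤ μ) {d p : ℕ} (hd : 1 ≤ d) (hp : p ≤ d) :
    Real.exp (-μ * d) ≤ 2 * Real.exp (-μ) * (1 / 2) ^ p := by
  have hexp : Real.exp (-μ) ≤ 1 / 2 := by
    calc Real.exp (-μ) ≤ Real.exp (-Real.log 2) := Real.exp_le_exp.2 (by linarith)
      _ = 1 / 2 := by rw [Real.exp_neg, Real.exp_log two_pos, one_div]
  obtain ⟨k, rfl⟩ := Nat.exists_eq_add_of_le' hd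
  calc Real.exp (-μ * ↑(k + 1)) = Real.exp (-μ) * Real.exp (-μ) ^ k := by
        rw [← Real.exp_nat_mul, ← Real.exp_add]
        push_cast
        ring_nf
    _ ≤ Real.exp (-μ) * (1 / 2) ^ k := by gcongr
    _ = 2 * Real.exp (-μ) * (1 / 2) ^ (k + 1) := by ring
    _ ≤ 2 * Real.exp (-μ) * (1 / 2) ^ p :=
        mul_le_mul_of_nonneg_left (pow_le_pow_of_le_one (by norm_num) (by norm_num) hp)
          (by positivity)

/-- Inside the arc `[0, N)` the distance to its nearer end, outside it the distance to the arc.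
It vanishes at both end sites of the arc, as `IsAdmissibleWeight` requires across its boundary. -/
def arcProfile (L N j : ℕ) : ℕ := if j < N then min j (N - 1 - j) else min (j + 1 - N) (L - j)

lemma prod_one_add_half_pow_arcProfile_le {L N : ℕ} (hN : N ≤ L) :
    ∏ j ∈ Finset.range L, (1 + (1 / 2 : ℝ) ^ arcProfile L N j) ≤ 256 := by
  have hq : (0 : ℝ) ≤ 1 / 2 := by norm_num
  have hinside : ∏ j ∈ Finset.range N, (1 + (1 / 2 : ℝ) ^ arcProfile L N j) ≤
      (2 * Real.exp 1) ^ 2 := by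
    calc ∏ j ∈ Finset.range N, (1 + (1 / 2 : ℝ) ^ arcProfile L N j)
        = ∏ j ∈ Finset.range N, (1 + (1 / 2 : ℝ) ^ min j (N - 1 - j)) :=
          Finset.prod_congr rfl fun j hj => by
            rw [arcProfile, if_pos (Finset.mem_range.1 hj)]
      _ ≤ (∏ j ∈ Finset.range N, (1 + (1 / 2 : ℝ) ^ j)) *
            ∏ j ∈ Finset.range N, (1 + (1 / 2 : ℝ) ^ (N - 1 - j)) :=
          prod_one_add_pow_min_le hq _ _ _
      _ = (∏ j ∈ Finset.range N, (1 + (1 / 2 : ℝ) ^ j)) ^ 2 := by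
          rw [Finset.prod_range_reflect (fun j => 1 + (1 / 2 : ℝ) ^ j), sq]
      _ ≤ (2 * Real.exp 1) ^ 2 := by
          gcongr
          exact prod_one_add_half_pow_le N
  have houtside : ∏ j ∈ Finset.Ico N L, (1 + (1 / 2 : ℝ) ^ arcProfile L N j) ≤
      Real.exp 1 ^ 2 := by
    calc ∏ j ∈ Finset.Ico N L, (1 + (1 / 2 : ℝ) ^ arcProfile L N j)
        = ∏ k ∈ Finset.range (L - N), (1 + (1 / 2 : ℝ) ^ min (k + 1) (L - N - 1 - k + 1)) := by
          rw [Finset.prod_Ico_eq_prod_range]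
          refine Finset.prod_congr rfl fun k hk => ?_
          have := Finset.mem_range.1 hk
          rw [arcProfile, if_neg (by omega)]
          congr 3 <;> omega
      _ ≤ (∏ k ∈ Finset.range (L - N), (1 + (1 / 2 : ℝ) ^ (k + 1))) *
            ∏ k ∈ Finset.range (L - N), (1 + (1 / 2 : ℝ) ^ (L - N - 1 - k + 1)) :=
          prod_one_add_pow_min_le hq _ _ _
      _ = (∏ k ∈ Finset.range (L - N), (1 + (1 / 2 : ℝ) ^ (k + 1))) ^ 2 := by
          rw [Finset.prod_range_reflect (fun k => 1 + (1 / 2 : ℝ) ^ (k + 1)), sq]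
      _ ≤ Real.exp 1 ^ 2 := by
          gcongr
          exact prod_one_add_half_pow_succ_le _
  have he : Real.exp 1 ^ 4 ≤ 64 := by
    calc Real.exp 1 ^ 4 ≤ 2.7182818286 ^ 4 := by gcongr; exact Real.exp_one_lt_d9.le
      _ ≤ 64 := by norm_num
  rw [← Finset.prod_range_mul_prod_Ico _ hN]
  calc _ ≤ (2 * Real.exp 1) ^ 2 * Real.exp 1 ^ 2 := by
        gcongr
    _ ≤ 256 := by nlinarith

variable {L : ℕ}

section Potential

variable (c : Finset (Fin L)) (w : Fin L → ℕ)

def potential (x : Finset (Fin L)) : ℕ := ∑ s ∈ symmDiff x c, w s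

variable {c w}

@[simp]
lemma potential_self : potential c w c = 0 := by simp [potential]

lemma potential_insert {x : Finset (Fin L)} {t : Fin L} (ht : t ∉ x) :
    (potential c w (insert t x) : ℤ) = potential c w x + if t ∈ c then -(w t : ℤ) else w t := by
  by_cases htc : t ∈ c
  · have hmem : t ∈ symmDiff x c := Finset.mem_symmDiff.2 (Or.inr ⟨htc, ht⟩)
    have heq : symmDiff (insert t x) c = (symmDiff x c).erase t := by
      ext r
      by_cases hr : r = t <;> simp [Finset.mem_symmDiff, hr, htc]
    rw [potential, potential, heq, if_pos htc, ← Finset.sum_erase_add _ _ hmem]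
    push_cast
    ring
  · have hmem : t ∉ symmDiff x c := by simp [Finset.mem_symmDiff, ht, htc]
    have heq : symmDiff (insert t x) c = insert t (symmDiff x c) := by
      ext r
      by_cases hr : r = t <;> simp [Finset.mem_symmDiff, hr, htc]
    rw [potential, potential, heq, if_neg htc, Finset.sum_insert hmem]
    push_cast
    ring

lemma sum_pow_potential_le {q : ℝ} (hq : 0 ≤ q) (S : Finset (Finset (Fin L))) :
    ∑ x ∈ S, q ^ potential c w x ≤ ∏ s, (1 + q ^ w s) := by
  calc ∑ x ∈ S, q ^ potential c w x
      ≤ ∑ x, q ^ potential c w x := Finset.sum_le_univ_sum_of_nonneg fun _ => by positivity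
    _ = ∑ x, ∏ s ∈ symmDiff x c, q ^ w s := by simp only [potential, Finset.prod_pow_eq_pow_sum]
    _ = ∑ T, ∏ s ∈ T, q ^ w s :=
        Fintype.sum_equiv (symmDiff_left_involutive c).toPerm _ _ fun _ => rfl
    _ = ∏ s, (1 + q ^ w s) := by rw [Finset.prod_one_add, Finset.powerset_univ]

end Potential

def coord (a s : Fin L) : ℕ := (s - a).val

lemma coord_lt (a s : Fin L) : coord a s < L := (s - a).isLt

variable [NeZero L]

lemma coord_injective (a : Fin L) : Function.Injective (coord a) :=
  fun _ _ h => sub_left_injective (Fin.ext h)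

lemma coord_add_natCast (a : Fin L) {i : ℕ} (hi : i < L) : coord a (a + (i : Fin L)) = i := by
  simp [coord, Fin.val_natCast, Nat.mod_eq_of_lt hi]

lemma coord_add_one (a s : Fin L) :
    coord a (s + 1) = if coord a s + 1 = L then 0 else coord a s + 1 := by
  have h := coord_lt a s
  rw [coord, add_sub_right_comm, Fin.val_add, Fin.val_one', Nat.add_mod_mod, ← coord]
  split_ifs with hL
  · rw [hL, Nat.mod_self]
  · exact Nat.mod_eq_of_lt (by omega)

lemma coord_sub_one {a s : Fin L} (h : coord a s ≠ 0) : coord a (s - 1) = coord a s - 1 := by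
  have := coord_add_one a (s - 1)
  rw [sub_add_cancel] at this
  have := coord_lt a (s - 1)
  split_ifs at * <;> omega

def arc (a : Fin L) (n : ℕ) : Finset (Fin L) := (Finset.range n).image fun i : ℕ => a + (i : Fin L)

lemma mem_arc {a s : Fin L} {n : ℕ} (hn : n ≤ L) : s ∈ arc a n ↔ coord a s < n := by
  simp only [arc, Finset.mem_image, Finset.mem_range]
  constructor
  · rintro ⟨i, hi, rfl⟩
    rwa [coord_add_natCast a (by omega)]
  · intro h
    refine ⟨coord a s, h, ?_⟩
    simp [coord]

lemma card_arc (a : Fin L) {n : ℕ} (hn : n ≤ L) : (arc a n).card = n := by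
  rw [arc, Finset.card_image_of_injOn, Finset.card_range]
  intro i hi j hj hij
  simp only [coe_range, Set.mem_Iio] at hi hj
  simpa [coord_add_natCast a (hi.trans_le hn), coord_add_natCast a (hj.trans_le hn)]
    using congrArg (coord a) hij

lemma droplet_eq_arc (N : ℕ) (m : Fin L) :
    droplet L N m = arc (m - (((N - 1) / 2 : ℕ) : Fin L)) N := by
  ext s
  simp only [droplet, arc, Finset.mem_image, Finset.mem_range]
  simp [add_comm]

lemma hcGraph_adj_insert_erase_sub_one {x : Finset (Fin L)} {s : Fin L} (hs : s ∈ x)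
    (hs' : s - 1 ∉ x) : (hcGraph L).Adj x (insert (s - 1) (x.erase s)) := by
  have hne : s - 1 ≠ s := (ne_of_mem_of_not_mem hs hs').symm
  refine ⟨?_, s - 1, ?_⟩
  · rw [Finset.card_insert_of_notMem (fun h => hs' (Finset.mem_of_mem_erase h)),
      Finset.card_erase_add_one hs]
  · rw [Nat.cast_one, sub_add_cancel]
    ext r
    simp only [Finset.mem_symmDiff, Finset.mem_insert, Finset.mem_erase, Finset.mem_singleton]
    by_cases hr : r = s
    · simp [hr, hs, hne.symm]
    · by_cases hr' : r = s - 1 <;> simp [hr, hr', hs']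

lemma exists_move_of_hcGraph_adj {u v : Finset (Fin L)} (h : (hcGraph L).Adj u v) :
    ∃ s t, (t = s + 1 ∨ s = t + 1) ∧ s ∈ u ∧ t ∉ u ∧ v = insert t (u.erase s) := by
  obtain ⟨hcard, j, hj⟩ := h
  rw [Nat.cast_one] at hj
  -- `u \ v` and `v \ u` have equal size and partition `{j, j + 1}`, so both are singletons
  have hsd : (u \ v).card = (v \ u).card := Finset.card_sdiff_comm hcard
  have hsum : (u \ v).card + (v \ u).card = ({j, j + 1} : Finset (Fin L)).card := by
    rw [← hj, symmDiff_def, Finset.sup_eq_union,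
      Finset.card_union_of_disjoint disjoint_sdiff_sdiff]
  have hpair : 0 < ({j, j + 1} : Finset (Fin L)).card ∧
      ({j, j + 1} : Finset (Fin L)).card ≤ 2 :=
    ⟨Finset.card_pos.2 ⟨j, Finset.mem_insert_self _ _⟩, Finset.card_le_two⟩
  obtain ⟨s, hs⟩ := Finset.card_eq_one.1 (show (u \ v).card = 1 by omega)
  obtain ⟨t, ht⟩ := Finset.card_eq_one.1 (show (v \ u).card = 1 by omega)
  have hsu : ∀ r, r ∈ u ∧ r ∉ v ↔ r = s := fun r => by
    rw [← Finset.mem_sdiff, hs, Finset.mem_singleton]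
  have htv : ∀ r, r ∈ v ∧ r ∉ u ↔ r = t := fun r => by
    rw [← Finset.mem_sdiff, ht, Finset.mem_singleton]
  have hst : ∀ r, r ∈ symmDiff u v ↔ r = s ∨ r = t := fun r => by
    rw [Finset.mem_symmDiff, hsu, htv]
  have hs' := (hsu s).2 rfl
  have ht' := (htv t).2 rfl
  have hne : s ≠ t := ne_of_mem_of_not_mem hs'.1 ht'.2
  refine ⟨s, t, ?_, hs'.1, ht'.2, ?_⟩
  · have hs2 : s = j ∨ s = j + 1 := by simpa [hj] using (hst s).2 (Or.inl rfl)
    have ht2 : t = j ∨ t = j + 1 := by simpa [hj] using (hst t).2 (Or.inr rfl)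
    rcases hs2 with rfl | rfl <;> rcases ht2 with rfl | rfl
    exacts [absurd rfl hne, Or.inl rfl, Or.inr rfl, absurd rfl hne]
  · ext r
    simp only [Finset.mem_insert, Finset.mem_erase]
    have := hsu r
    have := htv r
    by_cases hr : r ∈ u <;> by_cases hr' : r ∈ v <;> simp_all

lemma exists_mem_sub_one_notMem {x : Finset (Fin L)} {b : Fin L} (hx : x ≠ arc b x.card) :
    ∃ s ∈ x, coord b s ≠ 0 ∧ s - 1 ∉ x := by
  by_contra! hclosed
  -- otherwise `x` is closed under stepping towards `b`, hence an arc starting at `b`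
  have hdown : ∀ k, ∀ s ∈ x, coord b s = k → ∀ t, coord b t ≤ k → t ∈ x := by
    intro k
    induction k with
    | zero =>
      intro s hs hs0 t ht
      rwa [coord_injective b (hs0.trans (Nat.le_zero.1 ht).symm)] at hs
    | succ k ih =>
      intro s hs hsk t ht
      rcases Nat.lt_or_ge (coord b t) (k + 1) with htk | htk
      · exact ih (s - 1) (hclosed s hs (by omega)) (by rw [coord_sub_one (by omega)]; omega) t
          (by omega)
      · rwa [coord_injective b (hsk.trans (le_antisymm ht htk).symm)] at hs
  have hxL : x.card ≤ L := by simpa using Finset.card_le_univ x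
  refine hx (Finset.eq_of_subset_of_card_le (fun s hs => (mem_arc hxL).2 ?_)
    (card_arc b hxL).le)
  have hsub : arc b (coord b s + 1) ⊆ x := fun t ht =>
    hdown _ s hs rfl t (Nat.lt_succ_iff.1 ((mem_arc (coord_lt b s)).1 ht))
  simpa [card_arc b (coord_lt b s)] using Finset.card_le_card hsub

theorem reachable_arc (b : Fin L) (x : Finset (Fin L)) :
    (hcGraph L).Reachable x (arc b x.card) := by
  induction hn : ∑ s ∈ x, coord b s using Nat.strong_induction_on generalizing x with
  | _ n ih =>
    by_cases hx : x = arc b x.card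
    · rw [← hx]
    obtain ⟨s, hs, hs0, hs'⟩ := exists_mem_sub_one_notMem hx
    have hadj := hcGraph_adj_insert_erase_sub_one hs hs'
    have hsum : ∑ r ∈ insert (s - 1) (x.erase s), coord b r + 1 = n := by
      rw [Finset.sum_insert (fun h => hs' (Finset.mem_of_mem_erase h)), coord_sub_one hs0, ← hn,
        ← Finset.sum_erase_add x _ hs]
      omega
    rw [hadj.1]
    exact hadj.reachable.trans (ih _ (by omega) _ rfl)

def IsAdmissibleWeight (c : Finset (Fin L)) (w : Fin L → ℕ) : Prop :=
  ∀ s : Fin L, ((s ∈ c ↔ s + 1 ∈ c) → w (s + 1) ≤ w s + 1 ∧ w s ≤ w (s + 1) + 1) ∧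
    (¬(s ∈ c ↔ s + 1 ∈ c) → w s + w (s + 1) ≤ 1)

section Lipschitz

variable {c : Finset (Fin L)} {w : Fin L → ℕ}

lemma potential_le_of_adj (hw : IsAdmissibleWeight c w) {u v : Finset (Fin L)}
    (h : (hcGraph L).Adj u v) : potential c w v ≤ potential c w u + 1 := by
  -- moving a particle from `s` to `t` changes the potential by `±w t ∓ w s`
  obtain ⟨s, t, hst, hs, ht, rfl⟩ := exists_move_of_hcGraph_adj h
  have hu := potential_insert (c := c) (w := w) (Finset.notMem_erase s u)
  have hv := potential_insert (c := c) (w := w)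
    (fun h => ht (Finset.mem_of_mem_erase h) : t ∉ u.erase s)
  rw [Finset.insert_erase hs] at hu
  zify
  rcases hst with rfl | rfl
  · have := hw s
    split_ifs at hu hv <;> simp_all <;> omega
  · have := hw t
    split_ifs at hu hv <;> simp_all <;> omega

lemma potential_le_add_length (hw : IsAdmissibleWeight c w) {x y : Finset (Fin L)}
    (p : (hcGraph L).Walk x y) : potential c w x ≤ potential c w y + p.length := by
  induction p with
  | nil => simp
  | cons hadj p ih =>
    have := potential_le_of_adj hw hadj.symm
    rw [SimpleGraph.Walk.length_cons]
    omega

lemma potential_le_dist (hw : IsAdmissibleWeight c w) {x : Finset (Fin L)}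
    (h : (hcGraph L).Reachable x c) : potential c w x ≤ (hcGraph L).dist x c := by
  obtain ⟨p, hp⟩ := h.exists_walk_length_eq_dist
  simpa [hp] using potential_le_add_length hw p

end Lipschitz

def arcWeight (a : Fin L) (N : ℕ) (s : Fin L) : ℕ := arcProfile L N (coord a s)

lemma isAdmissibleWeight_arcWeight (a : Fin L) {N : ℕ} (hN : N ≤ L) :
    IsAdmissibleWeight (arc a N) (arcWeight a N) := by
  intro s
  have := coord_lt a s
  simp only [mem_arc hN, arcWeight, arcProfile, coord_add_one]
  split_ifs <;> omega

lemma prod_one_add_pow_arcWeight (q : ℝ) (a : Fin L) (N : ℕ) :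
    ∏ s, (1 + q ^ arcWeight a N s) = ∏ j ∈ Finset.range L, (1 + q ^ arcProfile L N j) := by
  rw [← Fin.prod_univ_eq_prod_range (fun j => 1 + q ^ arcProfile L N j)]
  exact Fintype.prod_equiv (Equiv.subRight a) _ _ fun _ => rfl

theorem sum_exp_neg_mul_dN_arc_le {N : ℕ} (hN : N ≤ L) {μ : ℝ} (hμ : Real.log 2 ≤ μ) (a : Fin L) :
    ∑ x ∈ Finset.powersetCard N (Finset.univ : Finset (Fin L)),
        Real.exp (-μ * (dN L x (arc a N) : ℝ)) ≤ 1 + 2 ^ 9 * Real.exp (-μ) := by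
  set P := Finset.powersetCard N (Finset.univ : Finset (Fin L))
  have hc : arc a N ∈ P := Finset.mem_powersetCard_univ.2 (card_arc a hN)
  have hterm : ∀ x ∈ P.erase (arc a N), Real.exp (-μ * (dN L x (arc a N) : ℝ)) ≤
      2 * Real.exp (-μ) * (1 / 2) ^ potential (arc a N) (arcWeight a N) x := by
    intro x hx
    obtain ⟨hne, hxP⟩ := Finset.mem_erase.1 hx
    have hreach : (hcGraph L).Reachable x (arc a N) := by
      simpa [(Finset.mem_powersetCard_univ.1 hxP)] using reachable_arc a x
    exact exp_neg_mul_le_half_pow hμ (hreach.pos_dist_of_ne hne)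
      (potential_le_dist (isAdmissibleWeight_arcWeight a hN) hreach)
  have hcount : ∑ x ∈ P.erase (arc a N), (1 / 2 : ℝ) ^ potential (arc a N) (arcWeight a N) x
      ≤ 256 :=
    (sum_pow_potential_le (by norm_num) _).trans
      ((prod_one_add_pow_arcWeight _ a N).trans_le (prod_one_add_half_pow_arcProfile_le hN))
  rw [← Finset.add_sum_erase _ _ hc]
  calc _ ≤ 1 + ∑ x ∈ P.erase (arc a N),
        2 * Real.exp (-μ) * (1 / 2) ^ potential (arc a N) (arcWeight a N) x := by
        gcongr with x hx
        · simp [dN]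
        · exact hterm x hx
    _ ≤ 1 + 2 * Real.exp (-μ) * 256 := by
        rw [← Finset.mul_sum]
        gcongr
    _ = 1 + 2 ^ 9 * Real.exp (-μ) := by ring

lemma exp_neg_mul_distDrop_le_sum (N : ℕ) (μ : ℝ) (x : Finset (Fin L)) :
    Real.exp (-μ * (distDrop L N x : ℝ)) ≤
      ∑ m, Real.exp (-μ * (dN L x (droplet L N m) : ℝ)) := by
  obtain ⟨m, hm⟩ := Nat.sInf_mem (Set.range_nonempty fun m : Fin L => dN L x (droplet L N m))
  rw [distDrop, ← hm]
  exact Finset.single_le_sum (f := fun m => Real.exp (-μ * (dN L x (droplet L N m) : ℝ)))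
    (fun m _ => (Real.exp_pos _).le) (Finset.mem_univ m)

end HardCore

open HardCore

/-- Summability estimate: for `N < L/2` and `μ ≥ ln 2`, the sum over all `N`-particle
configurations of `exp(-μ d_L^N(x, 𝒱_{L,1}^N))` is at most `L (1 + 2⁹ e^{-μ})`. -/
theorem sum_exp_dist_le (L N : ℕ) [NeZero L] (hN : 2 * N < L)
    (μ : ℝ) (hμ : Real.log 2 ≤ μ) :
    ∑ x ∈ Finset.powersetCard N (Finset.univ : Finset (Fin L)),
        Real.exp (-μ * (distDrop L N x : ℝ)) ≤
      (L : ℝ) * (1 + 2 ^ 9 * Real.exp (-μ)) := by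
  calc _ ≤ ∑ x ∈ Finset.powersetCard N (Finset.univ : Finset (Fin L)),
          ∑ m, Real.exp (-μ * (dN L x (droplet L N m) : ℝ)) :=
        Finset.sum_le_sum fun x _ => exp_neg_mul_distDrop_le_sum N μ x
    _ = ∑ m, ∑ x ∈ Finset.powersetCard N (Finset.univ : Finset (Fin L)),
          Real.exp (-μ * (dN L x (droplet L N m) : ℝ)) := Finset.sum_comm
    _ ≤ ∑ _m : Fin L, (1 + 2 ^ 9 * Real.exp (-μ)) := Finset.sum_le_sum fun m _ => by
        rw [droplet_eq_arc]
        exact sum_exp_neg_mul_dN_arc_le (by omega) hμ _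
    _ = (L : ℝ) * (1 + 2 ^ 9 * Real.exp (-μ)) := by
        rw [Finset.sum_const, Finset.card_univ, Fintype.card_fin, nsmul_eq_mul]
end
end

section
/- For μ ≥ ln 2 and any n ∈ ℕ, the sum over non-decreasing n-tuples of non-negative integers χ = (χ_1 ≤ χ_2 ≤ ... ≤ χ_n), of exp(−μ(χ_1 + ... + χ_n)), is at most 1 + 30 e^{−μ}. -/
open Finset

private lemma cons_monotone_aux {n : ℕ} (c : ℕ) (g : Fin n → ℕ) (hg : Monotone g) :
    Monotone (Fin.cons c (fun j => c + g j) : Fin (n + 1) → ℕ) := by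
  intro i j hij
  rcases Fin.eq_zero_or_eq_succ i with rfl | ⟨i', rfl⟩
  · rcases Fin.eq_zero_or_eq_succ j with rfl | ⟨j', rfl⟩
    · exact le_refl _
    · simp only [Fin.cons_zero, Fin.cons_succ]
      exact Nat.le_add_right _ _
  · rcases Fin.eq_zero_or_eq_succ j with rfl | ⟨j', rfl⟩
    · exfalso
      have : (i'.succ : Fin (n + 1)).val ≤ (0 : Fin (n + 1)).val := hij
      simp [Fin.val_succ] at this
    · simp only [Fin.cons_succ]
      have : i' ≤ j' := by
        have h := hij
        rw [Fin.le_def] at h ⊢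
        simpa [Fin.val_succ] using h
      exact Nat.add_le_add_left (hg this) c

set_option maxHeartbeats 1000000 in
private lemma hasSum_monotone (q : ℝ) (hq0 : 0 ≤ q) (hq1 : q < 1) (n : ℕ) :
    HasSum (fun χ : {χ : Fin n → ℕ // Monotone χ} => q ^ (∑ j, χ.1 j))
      (∏ m ∈ Finset.range n, (1 - q ^ (m + 1))⁻¹) := by
  induction n with
  | zero =>
      have huniq : ∀ χ : {χ : Fin 0 → ℕ // Monotone χ},
          χ = ⟨fun i => 0, monotone_const⟩ := by
        rintro ⟨χ, hχ⟩
        ext i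
        exact i.elim0
      have h := hasSum_single
        (f := fun χ : {χ : Fin 0 → ℕ // Monotone χ} => q ^ (∑ j, χ.1 j))
        (⟨fun _ => 0, monotone_const⟩)
        (fun b hb => (hb (huniq b)).elim)
      simpa using h
  | succ n ih =>
      -- equivalence between ℕ × (monotone n-tuples) and monotone (n+1)-tuples
      let e : ℕ × {χ : Fin n → ℕ // Monotone χ} ≃ {χ : Fin (n + 1) → ℕ // Monotone χ} :=
        { toFun := fun p =>
            ⟨Fin.cons p.1 (fun j => p.1 + p.2.1 j), cons_monotone_aux p.1 p.2.1 p.2.2⟩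
          invFun := fun χ =>
            (χ.1 0, ⟨fun j => χ.1 j.succ - χ.1 0, by
              intro i j hij
              refine Nat.sub_le_sub_right (χ.2 ?_) _
              rw [Fin.le_def]
              simpa [Fin.val_succ] using hij⟩)
          left_inv := by
            rintro ⟨c, t, ht⟩
            refine Prod.ext ?_ ?_
            · simp
            · apply Subtype.ext
              funext j
              simp
          right_inv := by
            rintro ⟨χ, hχ⟩
            apply Subtype.ext
            funext i
            rcases Fin.eq_zero_or_eq_succ i with rfl | ⟨i', rfl⟩
            · simp
            · simp only [Fin.cons_succ]
              exact Nat.add_sub_cancel' (hχ (Fin.zero_le _)) }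
      rw [← e.hasSum_iff]
      have hgeo : HasSum (fun c : ℕ => (q ^ (n + 1)) ^ c) (1 - q ^ (n + 1))⁻¹ :=
        hasSum_geometric_of_lt_one (pow_nonneg hq0 _)
          (pow_lt_one₀ hq0 hq1 (Nat.succ_ne_zero n))
      have hsummable :
          Summable (fun p : ℕ × {χ : Fin n → ℕ // Monotone χ} =>
            (q ^ (n + 1)) ^ p.1 * q ^ (∑ j, p.2.1 j)) := by
        apply Summable.mul_of_nonneg hgeo.summable ih.summable
        · exact fun _ => pow_nonneg (pow_nonneg hq0 _) _
        · exact fun _ => pow_nonneg hq0 _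
      have hmul := hgeo.mul ih hsummable
      have hfe : (fun χ : {χ : Fin (n + 1) → ℕ // Monotone χ} => q ^ (∑ j, χ.1 j)) ∘ e
          = fun p : ℕ × {χ : Fin n → ℕ // Monotone χ} =>
              (q ^ (n + 1)) ^ p.1 * q ^ (∑ j, p.2.1 j) := by
        funext p
        obtain ⟨c, t, ht⟩ := p
        simp only [Function.comp_apply, e, Equiv.coe_fn_mk]
        rw [Fin.sum_univ_succ]
        simp only [Fin.cons_zero, Fin.cons_succ]
        rw [Finset.sum_add_distrib, Finset.sum_const, Finset.card_univ, Fintype.card_fin,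
          smul_eq_mul, ← pow_mul, ← pow_add]
        congr 1
        ring
      rw [hfe]
      have : (∏ m ∈ Finset.range (n + 1), (1 - q ^ (m + 1))⁻¹)
          = (1 - q ^ (n + 1))⁻¹ * ∏ m ∈ Finset.range n, (1 - q ^ (m + 1))⁻¹ := by
        rw [Finset.prod_range_succ, mul_comm]
      rw [this]
      exact hmul

/-- Geometric-series estimate: for `μ ≥ ln 2`, the sum over all non-decreasing `n`-tuples
of non-negative integers `χ` of `exp(-μ |χ|₁)` is at most `1 + 30 e^{-μ}`. -/
theorem sum_monotone_tuples_le (n : ℕ) (μ : ℝ) (hμ : Real.log 2 ≤ μ) :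
    ∑' χ : {χ : Fin n → ℕ // Monotone χ},
        Real.exp (-μ * ∑ j : Fin n, (χ.1 j : ℝ)) ≤ 1 + 30 * Real.exp (-μ) := by
  set q : ℝ := Real.exp (-μ) with hqdef
  have hq0 : 0 < q := Real.exp_pos _
  have hqhalf : q ≤ 1 / 2 := by
    have h1 : Real.exp (-μ) ≤ Real.exp (-(Real.log 2)) :=
      Real.exp_le_exp.mpr (by linarith)
    have h2 : Real.exp (-(Real.log 2)) = 1 / 2 := by
      rw [Real.exp_neg, Real.exp_log (by norm_num : (0:ℝ) < 2)]
      norm_num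
    rw [hqdef]
    linarith [h1, h2.le]
  have hq1 : q < 1 := lt_of_le_of_lt hqhalf (by norm_num)
  have hform : ∀ χ : {χ : Fin n → ℕ // Monotone χ},
      Real.exp (-μ * ∑ j : Fin n, (χ.1 j : ℝ)) = q ^ (∑ j, χ.1 j) := by
    intro χ
    rw [hqdef, ← Real.exp_nat_mul]
    congr 1
    push_cast
    ring
  rw [tsum_congr hform, (hasSum_monotone q hq0.le hq1 n).tsum_eq]
  -- analytic estimate: ∏ (1 - q^(m+1))⁻¹ ≤ 1 + 30 q
  have hfac : ∀ m : ℕ, (1 - q ^ (m + 1))⁻¹ ≤ Real.exp (2 * q ^ (m + 1)) := by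
    intro m
    have hx0 : 0 < q ^ (m + 1) := pow_pos hq0 _
    have hxq : q ^ (m + 1) ≤ q := by
      calc q ^ (m + 1) ≤ q ^ 1 :=
            pow_le_pow_of_le_one hq0.le hq1.le (Nat.one_le_iff_ne_zero.mpr (Nat.succ_ne_zero m))
        _ = q := pow_one q
    have hxh : q ^ (m + 1) ≤ 1 / 2 := le_trans hxq hqhalf
    have h1 : (0:ℝ) < 1 - q ^ (m + 1) := by linarith
    have h2 : 2 * q ^ (m + 1) + 1 ≤ Real.exp (2 * q ^ (m + 1)) :=
      Real.add_one_le_exp _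
    rw [inv_eq_one_div, div_le_iff₀ h1]
    nlinarith [h2, hx0, hxh]
  have hsumgeo : ∑ m ∈ Finset.range n, q ^ m ≤ 2 := by
    have h := Summable.sum_le_tsum (Finset.range n) (fun i _ => pow_nonneg hq0.le i)
      (summable_geometric_of_lt_one hq0.le hq1)
    rw [tsum_geometric_of_lt_one hq0.le hq1] at h
    have : (1 - q)⁻¹ ≤ 2 := by
      rw [inv_eq_one_div, div_le_iff₀ (by linarith : (0:ℝ) < 1 - q)]
      linarith
    linarith
  have hsum : ∑ m ∈ Finset.range n, 2 * q ^ (m + 1) ≤ 4 * q := by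
    have heq : ∑ m ∈ Finset.range n, 2 * q ^ (m + 1)
        = 2 * q * ∑ m ∈ Finset.range n, q ^ m := by
      rw [Finset.mul_sum]
      exact Finset.sum_congr rfl (fun m _ => by ring)
    rw [heq]
    nlinarith [hsumgeo, hq0.le]
  have hexp : Real.exp (4 * q) ≤ 1 + 30 * q := by
    have hE : Real.exp (4 * q) ≤ Real.exp 2 := Real.exp_le_exp.mpr (by linarith)
    have he2 : Real.exp 2 < 7.5 := by
      have h := Real.exp_one_lt_d9
      have h2 : Real.exp 2 = Real.exp 1 * Real.exp 1 := by
        rw [← Real.exp_add]; norm_num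
      nlinarith [Real.exp_pos 1]
    have h3 : 1 - 4 * q ≤ (Real.exp (4 * q))⁻¹ := by
      have := Real.add_one_le_exp (-(4 * q))
      rw [Real.exp_neg] at this
      linarith
    have hEpos : 0 < Real.exp (4 * q) := Real.exp_pos _
    have h5 : Real.exp (4 * q) * (1 - 4 * q) ≤ 1 := by
      calc Real.exp (4 * q) * (1 - 4 * q)
          ≤ Real.exp (4 * q) * (Real.exp (4 * q))⁻¹ :=
            mul_le_mul_of_nonneg_left h3 hEpos.le
        _ = 1 := mul_inv_cancel₀ hEpos.ne'
    nlinarith [h5, hE, he2, hq0.le, hEpos]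
  calc ∏ m ∈ Finset.range n, (1 - q ^ (m + 1))⁻¹
      ≤ ∏ m ∈ Finset.range n, Real.exp (2 * q ^ (m + 1)) := by
        refine Finset.prod_le_prod (fun m _ => ?_) (fun m _ => hfac m)
        have hx : q ^ (m + 1) < 1 := pow_lt_one₀ hq0.le hq1 (Nat.succ_ne_zero m)
        exact inv_nonneg.mpr (by linarith)
    _ = Real.exp (∑ m ∈ Finset.range n, 2 * q ^ (m + 1)) := (Real.exp_sum _ _).symm
    _ ≤ Real.exp (4 * q) := Real.exp_le_exp.mpr hsum
    _ ≤ 1 + 30 * q := hexp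
end
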